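/- There exists a unique twice continuously differentiable function w : [0,∞) → ℝ satisfying w''(t) − (3 g(t)² − 1) w(t) = g'(t) for all t ≥ 0, w(0) = 0, and w(t) → 0 as t → ∞; moreover this w is exponentially decaying (there exist C > 0 and β > 0 with |w(t)| ≤ C e^{−β t} for all t ≥ 0). -/

import Mathlib

/-!
In the variable `s = t / √2` the equation reads `u'' - (6 tanh² s - 2) u = 1 - tanh² s`. Its
homogeneous part has the positive solution `1 - tanh² s` (a multiple of `g'`), and variation of
constants produces an explicit solution `u` with `u 0 = 0` and `|u s| ≤ 2 e^{-s}`.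

For uniqueness, the difference `d` of two solutions solves `d'' = (3 g² - 1) d`, as does
`φ = g' ≍ e^{-√2 t}`. Their Wronskian `W = d' φ - d φ'` is constant and `(d / φ)' = W / φ²`.
If `W ≠ 0`, then `d / φ` grows like `e^{2√2 t}`, so `d` grows like `e^{√2 t}`, contradicting
`d → 0`. Hence `d = K φ`, and `d 0 = 0` with `φ` bounded below near `0` forces `K = 0`.
-/

/-- The heteroclinic solution `g(t) = tanh(t/√2)` of the 1-D Allen–Cahn equation. -/
noncomputable def hetero (t : ℝ) : ℝ := Real.tanh (t / Real.sqrt 2)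

open Real Set Filter Topology

namespace Real

theorem hasDerivAt_tanh (x : ℝ) : HasDerivAt tanh (1 - tanh x ^ 2) x := by
  rw [show tanh = sinh / cosh from funext tanh_eq_sinh_div_cosh]
  refine ((hasDerivAt_sinh x).div (hasDerivAt_cosh x) (cosh_pos x).ne').congr_deriv ?_
  have := (cosh_pos x).ne'
  simp only [Pi.div_apply]
  field_simp

theorem contDiff_tanh {n : WithTop ℕ∞} : ContDiff ℝ n tanh := by
  rw [show tanh = sinh / cosh from funext tanh_eq_sinh_div_cosh]
  exact contDiff_sinh.div contDiff_cosh fun x => (cosh_pos x).ne'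

theorem tanh_eq_exp_neg_two_mul (x : ℝ) :
    tanh x = (1 - exp (-2 * x)) / (1 + exp (-2 * x)) := by
  rw [tanh_eq, show -2 * x = -x + -x by ring, exp_add, exp_neg]
  field_simp

theorem tanh_nonneg {x : ℝ} (hx : 0 ≤ x) : 0 ≤ tanh x := by
  rw [tanh_eq_exp_neg_two_mul]
  have : exp (-2 * x) ≤ 1 := exp_le_one_iff.2 (by linarith)
  exact div_nonneg (by linarith) (by positivity)

theorem one_add_tanh_ne_zero (x : ℝ) : 1 + tanh x ≠ 0 := by
  linarith [neg_one_lt_tanh x]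

theorem one_sub_tanh_le (x : ℝ) : 1 - tanh x ≤ 2 * exp (-2 * x) := by
  rw [tanh_eq_exp_neg_two_mul]
  have := exp_pos (-2 * x)
  rw [one_sub_div (by positivity), div_le_iff₀ (by positivity)]
  nlinarith

theorem one_sub_tanh_sq_eq (x : ℝ) :
    1 - tanh x ^ 2 = 4 * exp (-2 * x) / (1 + exp (-2 * x)) ^ 2 := by
  rw [tanh_eq_exp_neg_two_mul]
  have := exp_pos (-2 * x)
  field_simp
  ring

theorem one_sub_tanh_sq_le (x : ℝ) : 1 - tanh x ^ 2 ≤ 4 * exp (-2 * x) := by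
  rw [one_sub_tanh_sq_eq, div_le_iff₀ (by positivity)]
  have := exp_pos (-2 * x)
  nlinarith [mul_pos this this, pow_pos this 3]

theorem exp_neg_two_mul_le_one_sub_tanh_sq {x : ℝ} (hx : 0 ≤ x) :
    exp (-2 * x) ≤ 1 - tanh x ^ 2 := by
  rw [one_sub_tanh_sq_eq, le_div_iff₀ (by positivity)]
  have := exp_pos (-2 * x)
  have h1 : exp (-2 * x) ≤ 1 := exp_le_one_iff.2 (by linarith)
  have h3 : 0 ≤ exp (-2 * x) + 3 := by positivity
  nlinarith [mul_nonneg (mul_nonneg this.le (sub_nonneg.2 h1)) h3]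

theorem mul_exp_neg_two_mul_le (x : ℝ) : x * exp (-2 * x) ≤ exp (-x) := by
  calc x * exp (-2 * x) ≤ exp x * exp (-2 * x) := by
        gcongr
        linarith [add_one_le_exp x]
    _ = exp (-x) := by rw [← exp_add]; ring_nf

end Real

section MonotoneOnIoi

variable {f f' : ℝ → ℝ} {a : ℝ}

theorem monotoneOn_Ioi_of_hasDerivAt_nonneg (hf : ∀ x > a, HasDerivAt f (f' x) x)
    (hf' : ∀ x > a, 0 ≤ f' x) : MonotoneOn f (Ioi a) := by
  refine monotoneOn_of_hasDerivWithinAt_nonneg (f' := f') (convex_Ioi a)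
    (fun x hx => (hf x hx).continuousAt.continuousWithinAt) ?_ ?_ <;> rw [interior_Ioi]
  · exact fun x hx => (hf x hx).hasDerivWithinAt
  · exact hf'

theorem eq_of_hasDerivAt_zero_of_mem_Ioi (hf : ∀ x > a, HasDerivAt f 0 x) {x y : ℝ}
    (hx : a < x) (hy : a < y) : f x = f y :=
  isOpen_Ioi.is_const_of_deriv_eq_zero isPreconnected_Ioi
    (fun z hz => (hf z hz).differentiableAt.differentiableWithinAt)
    (fun z hz => (hf z hz).deriv) hx hy

end MonotoneOnIoi

theorem tendsto_mul_exp_sq_sub_exp_atTop {κ a : ℝ} (hκ : 0 < κ) (ha : 0 < a) :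
    Tendsto (fun t => κ * exp (a * t) ^ 2 - exp (a * t)) atTop atTop := by
  have hx : Tendsto (fun x : ℝ => x * (κ * x - 1)) atTop atTop :=
    tendsto_id.atTop_mul_atTop₀ (tendsto_atTop_add_const_right _ _ (tendsto_id.const_mul_atTop hκ))
  refine (hx.comp (tendsto_exp_atTop.comp (tendsto_id.const_mul_atTop ha))).congr fun t => ?_
  simp only [Function.comp, id]
  ring

theorem monotoneOn_sub_mul_exp_sq {G φ : ℝ → ℝ} {k a C : ℝ} (hk : 0 ≤ k) (ha : 0 < a)
    (hC : 0 < C) (hG : ∀ t > 0, HasDerivAt G (k / φ t ^ 2) t) (hφ0 : ∀ t > 0, 0 < φ t)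
    (hφ_le : ∀ t > 0, φ t ≤ C * exp (-a * t)) :
    MonotoneOn (fun t => G t - k / (2 * a * C ^ 2) * exp (a * t) ^ 2) (Ioi 0) := by
  have hm : ∀ t, HasDerivAt (fun t => k / (2 * a * C ^ 2) * exp (a * t) ^ 2)
      (k / C ^ 2 * exp (a * t) ^ 2) t := by
    intro t
    refine ((((hasDerivAt_id t).const_mul a).exp.pow 2).const_mul _).congr_deriv ?_
    simp only [id]
    field_simp
    ring
  refine monotoneOn_Ioi_of_hasDerivAt_nonneg (fun t ht => (hG t ht).sub (hm t)) fun t ht => ?_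
  have hφ0 := hφ0 t ht
  have hsq : φ t ^ 2 * exp (a * t) ^ 2 ≤ C ^ 2 := by
    rw [← mul_pow]
    gcongr
    calc φ t * exp (a * t) ≤ C * exp (-a * t) * exp (a * t) := by gcongr; exact hφ_le t ht
      _ = C := by rw [mul_assoc, ← exp_add]; ring_nf; simp
  rw [sub_nonneg, div_mul_eq_mul_div, div_le_div_iff₀ (by positivity) (by positivity)]
  nlinarith

theorem not_tendsto_mul_zero_of_hasDerivAt_div_sq {G φ : ℝ → ℝ} {k a c C : ℝ} (hk : 0 < k)
    (ha : 0 < a) (hc : 0 < c) (hG : ∀ t > 0, HasDerivAt G (k / φ t ^ 2) t)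
    (hφ_ge : ∀ t > 0, c * exp (-a * t) ≤ φ t) (hφ_le : ∀ t > 0, φ t ≤ C * exp (-a * t)) :
    ¬Tendsto (fun t => G t * φ t) atTop (𝓝 0) := by
  intro hlim
  have hφ0 : ∀ t > 0, 0 < φ t := fun t ht =>
    (by positivity : 0 < c * exp (-a * t)).trans_le (hφ_ge t ht)
  have hC : 0 < C := by
    have := (hφ_ge 1 one_pos).trans (hφ_le 1 one_pos)
    nlinarith [exp_pos (-a * 1)]
  -- `G` grows at least like `e^{2at}`, but `G φ → 0` keeps it below `e^{at}`.
  have hmono := monotoneOn_sub_mul_exp_sq hk.le ha hC hG hφ0 hφ_le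
  have hG_le : ∀ᶠ t in atTop, G t ≤ exp (a * t) := by
    filter_upwards [hlim.eventually (ge_mem_nhds hc), eventually_gt_atTop 0] with t hGφ ht
    have hφ := hφ_ge t ht
    have hexp : exp (-a * t) * exp (a * t) = 1 := by rw [← exp_add]; ring_nf; simp
    by_contra! hlt
    have hpos : 0 < c * exp (-a * t) := by positivity
    nlinarith [mul_pos (sub_pos.2 hlt) hpos, mul_nonneg (exp_pos (a * t)).le (sub_nonneg.2 hφ),
      mul_nonneg (sub_pos.2 hlt).le (sub_nonneg.2 hφ)]
  set κ := k / (2 * a * C ^ 2)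
  obtain ⟨t, hGt, hlarge, ht⟩ :=
    (hG_le.and (((tendsto_mul_exp_sq_sub_exp_atTop (κ := κ) (by positivity) ha).eventually_gt_atTop
      (κ * exp (a * 1) ^ 2 - G 1)).and (eventually_ge_atTop 1))).exists
  have := hmono (mem_Ioi.2 one_pos) (mem_Ioi.2 (by linarith)) ht
  simp only at this
  linarith

theorem homogeneous_solution_eq_const_mul {q φ φ' d d' : ℝ → ℝ} {a c C : ℝ} (ha : 0 < a)
    (hc : 0 < c) (hφ : ∀ t > 0, HasDerivAt φ (φ' t) t)
    (hφ' : ∀ t > 0, HasDerivAt φ' (q t * φ t) t)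
    (hφ_ge : ∀ t > 0, c * exp (-a * t) ≤ φ t) (hφ_le : ∀ t > 0, φ t ≤ C * exp (-a * t))
    (hd : ∀ t > 0, HasDerivAt d (d' t) t) (hd' : ∀ t > 0, HasDerivAt d' (q t * d t) t)
    (hd_top : Tendsto d atTop (𝓝 0)) : ∃ K, ∀ t > 0, d t = K * φ t := by
  have hφ0 : ∀ t > 0, 0 < φ t := fun t ht =>
    (by positivity : 0 < c * exp (-a * t)).trans_le (hφ_ge t ht)
  set W := fun t => d' t * φ t - d t * φ' t
  have hW : ∀ t > 0, W t = W 1 := fun t ht => eq_of_hasDerivAt_zero_of_mem_Ioi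
    (fun s hs => (((hd' s hs).mul (hφ s hs)).sub ((hd s hs).mul (hφ' s hs))).congr_deriv
      (by ring)) ht one_pos
  have hquot : ∀ t > 0, HasDerivAt (fun s => d s / φ s) (W 1 / φ t ^ 2) t := fun t ht =>
    ((hd t ht).div (hφ t ht) (hφ0 t ht).ne').congr_deriv (by rw [← hW t ht])
  have hW1 : W 1 = 0 := by
    by_contra hne
    refine not_tendsto_mul_zero_of_hasDerivAt_div_sq (G := fun s => W 1 * (d s / φ s))
      (pow_pos (abs_pos.2 hne) 2 |>.trans_eq (sq_abs _)) ha hc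
      (fun t ht => ((hquot t ht).const_mul (W 1)).congr_deriv (by ring)) hφ_ge hφ_le ?_
    have hWd : Tendsto (fun t => W 1 * d t) atTop (𝓝 0) := by simpa using hd_top.const_mul (W 1)
    refine hWd.congr' ?_
    filter_upwards [eventually_gt_atTop 0] with t ht
    field_simp [(hφ0 t ht).ne']
  refine ⟨d 1 / φ 1, fun t ht => ?_⟩
  have hconst : d t / φ t = d 1 / φ 1 := eq_of_hasDerivAt_zero_of_mem_Ioi
    (fun s hs => (hquot s hs).congr_deriv (by rw [hW1, zero_div])) ht one_pos
  rw [← hconst, div_mul_cancel₀ _ (hφ0 t ht).ne']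

theorem homogeneous_solution_eq_zero {q φ φ' d d' : ℝ → ℝ} {a c C : ℝ} (ha : 0 < a) (hc : 0 < c)
    (hφ : ∀ t > 0, HasDerivAt φ (φ' t) t) (hφ' : ∀ t > 0, HasDerivAt φ' (q t * φ t) t)
    (hφ_ge : ∀ t > 0, c * exp (-a * t) ≤ φ t) (hφ_le : ∀ t > 0, φ t ≤ C * exp (-a * t))
    (hd : ∀ t > 0, HasDerivAt d (d' t) t) (hd' : ∀ t > 0, HasDerivAt d' (q t * d t) t)
    (hd_cont : ContinuousWithinAt d (Ici 0) 0) (hd0 : d 0 = 0)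
    (hd_top : Tendsto d atTop (𝓝 0)) {t : ℝ} (ht : 0 ≤ t) : d t = 0 := by
  obtain ⟨K, hdK⟩ :=
    homogeneous_solution_eq_const_mul ha hc hφ hφ' hφ_ge hφ_le hd hd' hd_top
  have hK : K = 0 := by
    have hlim : Tendsto (fun t => |d t|) (𝓝[>] 0) (𝓝 0) := by
      simpa [hd0] using (hd_cont.tendsto.mono_left (nhdsWithin_mono _ Ioi_subset_Ici_self)).abs
    have hbound : |K| * (c * exp (-a)) ≤ 0 := by
      refine ge_of_tendsto hlim ?_
      filter_upwards [Ioo_mem_nhdsGT one_pos] with s hs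
      have hφ_lower : c * exp (-a) ≤ φ s := calc
        c * exp (-a) ≤ c * exp (-a * s) := by gcongr; nlinarith [hs.2]
        _ ≤ φ s := hφ_ge s hs.1
      rw [hdK s hs.1, abs_mul, abs_of_pos ((by positivity : 0 < c * exp (-a)).trans_le hφ_lower)]
      gcongr
    exact abs_nonpos_iff.1 (nonpos_of_mul_nonpos_left hbound (by positivity))
  rcases ht.eq_or_lt with rfl | ht
  · exact hd0
  · rw [hdK t ht, hK, zero_mul]

noncomputable def heteroDeriv (t : ℝ) : ℝ := (1 - hetero t ^ 2) / √2

theorem hasDerivAt_hetero (t : ℝ) : HasDerivAt hetero (heteroDeriv t) t := by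
  refine ((hasDerivAt_tanh (t / √2)).comp t ((hasDerivAt_id t).div_const √2)).congr_deriv ?_
  simp [heteroDeriv, hetero, div_eq_mul_inv]

theorem deriv_hetero : deriv hetero = heteroDeriv :=
  funext fun t => (hasDerivAt_hetero t).deriv

theorem hasDerivAt_heteroDeriv (t : ℝ) :
    HasDerivAt heteroDeriv (-√2 * hetero t * heteroDeriv t) t := by
  refine (((hasDerivAt_hetero t).pow 2).const_sub 1 |>.div_const √2).congr_deriv ?_
  have : √2 ≠ 0 := by positivity
  simp only [heteroDeriv]
  field_simp
  rw [sq_sqrt zero_le_two]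
  ring

theorem hasDerivAt_neg_sqrt_two_mul_hetero_mul_heteroDeriv (t : ℝ) :
    HasDerivAt (fun t => -√2 * hetero t * heteroDeriv t)
      ((3 * hetero t ^ 2 - 1) * heteroDeriv t) t := by
  refine (((hasDerivAt_hetero t).const_mul (-√2)).mul (hasDerivAt_heteroDeriv t)).congr_deriv ?_
  have : √2 ≠ 0 := by positivity
  simp only [heteroDeriv]
  field_simp
  rw [sq_sqrt zero_le_two]
  ring

theorem neg_two_mul_div_sqrt_two (t : ℝ) : -2 * (t / √2) = -√2 * t := by
  field_simp
  rw [sq_sqrt zero_le_two]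
  ring

theorem inv_sqrt_two_mul_exp_le_heteroDeriv {t : ℝ} (ht : 0 ≤ t) :
    (√2)⁻¹ * exp (-√2 * t) ≤ heteroDeriv t := by
  have h := exp_neg_two_mul_le_one_sub_tanh_sq (div_nonneg ht (sqrt_nonneg 2))
  rw [neg_two_mul_div_sqrt_two] at h
  rw [inv_mul_eq_div]
  exact div_le_div_of_nonneg_right h (sqrt_nonneg 2)

theorem heteroDeriv_le (t : ℝ) : heteroDeriv t ≤ 4 / √2 * exp (-√2 * t) := by
  have h := one_sub_tanh_sq_le (t / √2)
  rw [neg_two_mul_div_sqrt_two] at h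
  rw [div_mul_eq_mul_div]
  exact div_le_div_of_nonneg_right h (sqrt_nonneg 2)

noncomputable def uSol (s : ℝ) : ℝ :=
  -(tanh s * (1 - tanh s) * (4 * tanh s + 5)) / (12 * (1 + tanh s)) - s * (1 - tanh s ^ 2) / 4

noncomputable def uSolDeriv (s : ℝ) : ℝ :=
  (1 - tanh s ^ 2) * (2 * tanh s / 3 - 1 / 2 + s * tanh s / 2) - (1 - tanh s) / (6 * (1 + tanh s))

theorem hasDerivAt_uSol (s : ℝ) : HasDerivAt uSol (uSolDeriv s) s := by
  have ht := hasDerivAt_tanh s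
  have hden := (ht.const_add 1).const_mul 12
  have hne : 12 * (1 + tanh s) ≠ 0 := mul_ne_zero (by norm_num) (one_add_tanh_ne_zero s)
  have := one_add_tanh_ne_zero s
  refine ((((ht.mul (ht.const_sub 1)).mul ((ht.const_mul 4).add_const 5)).neg.div hden hne).sub
    (((hasDerivAt_id s).mul ((ht.pow 2).const_sub 1)).div_const 4)).congr_deriv ?_
  simp only [uSolDeriv, id, Pi.mul_apply, Pi.pow_apply, Pi.neg_apply]
  field_simp
  ring

theorem hasDerivAt_uSolDeriv (s : ℝ) :
    HasDerivAt uSolDeriv ((6 * tanh s ^ 2 - 2) * uSol s + (1 - tanh s ^ 2)) s := by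
  have ht := hasDerivAt_tanh s
  have hden := (ht.const_add 1).const_mul 6
  have hne : 6 * (1 + tanh s) ≠ 0 := mul_ne_zero (by norm_num) (one_add_tanh_ne_zero s)
  have := one_add_tanh_ne_zero s
  refine ((((ht.pow 2).const_sub 1).mul ((((ht.const_mul 2).div_const 3).sub_const (1 / 2)).add
    (((hasDerivAt_id s).mul ht).div_const 2))).sub ((ht.const_sub 1).div hden hne)).congr_deriv ?_
  simp only [uSol, id, Pi.mul_apply, Pi.pow_apply, Pi.add_apply]
  field_simp
  ring

theorem uSol_zero : uSol 0 = 0 := by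
  simp [uSol]

theorem abs_uSol_le {s : ℝ} (hs : 0 ≤ s) : |uSol s| ≤ 2 * exp (-s) := by
  have hT0 := tanh_nonneg hs
  have hT1 := tanh_lt_one s
  have hlin := one_sub_tanh_le s
  have hsq := one_sub_tanh_sq_le s
  set T := tanh s
  set r := T * (4 * T + 5) / (12 * (1 + T))
  have hr0 : 0 ≤ r := by positivity
  have hr : r ≤ 3 / 8 := by
    rw [div_le_iff₀ (by positivity)]
    nlinarith
  have hu : -uSol s = (1 - T) * r + s * (1 - T ^ 2) / 4 := by
    simp only [uSol, r, T]
    ring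
  have h1 : 0 ≤ (1 - T) * r := mul_nonneg (by linarith) hr0
  have h2 : 0 ≤ s * (1 - T ^ 2) := mul_nonneg hs (by nlinarith)
  have hE : exp (-2 * s) ≤ exp (-s) := exp_le_exp.2 (by linarith)
  have hsE := mul_exp_neg_two_mul_le s
  rw [abs_of_nonpos (by linarith)]
  nlinarith

theorem contDiff_uSol : ContDiff ℝ 2 uSol := by
  unfold uSol
  have := contDiff_tanh (n := 2)
  fun_prop (disch := exact fun s => mul_ne_zero (by norm_num) (one_add_tanh_ne_zero s))

noncomputable def wSol (t : ℝ) : ℝ := √2 * uSol (t / √2)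

theorem contDiff_wSol : ContDiff ℝ 2 wSol :=
  contDiff_const.mul (contDiff_uSol.comp (contDiff_id.div_const _))

theorem wSol_zero : wSol 0 = 0 := by
  simp [wSol, uSol_zero]

theorem hasDerivAt_wSol (t : ℝ) : HasDerivAt wSol (uSolDeriv (t / √2)) t := by
  refine (((hasDerivAt_uSol _).comp t ((hasDerivAt_id t).div_const √2)).const_mul √2).congr_deriv ?_
  have : √2 ≠ 0 := by positivity
  simp only [id]
  field_simp

theorem deriv_wSol : deriv wSol = fun t => uSolDeriv (t / √2) :=
  funext fun t => (hasDerivAt_wSol t).deriv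

theorem hasDerivAt_deriv_wSol (t : ℝ) :
    HasDerivAt (deriv wSol) ((3 * hetero t ^ 2 - 1) * wSol t + heteroDeriv t) t := by
  rw [deriv_wSol]
  refine ((hasDerivAt_uSolDeriv _).comp t ((hasDerivAt_id t).div_const √2)).congr_deriv ?_
  have : √2 ≠ 0 := by positivity
  simp only [wSol, heteroDeriv, hetero, id]
  field_simp
  rw [sq_sqrt zero_le_two]
  ring

theorem abs_wSol_le {t : ℝ} (ht : 0 ≤ t) : |wSol t| ≤ 2 * √2 * exp (-(√2)⁻¹ * t) := by
  calc |wSol t| = √2 * |uSol (t / √2)| := by rw [wSol, abs_mul, abs_of_nonneg (sqrt_nonneg 2)]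
    _ ≤ √2 * (2 * exp (-(t / √2))) := by gcongr; exact abs_uSol_le (by positivity)
    _ = 2 * √2 * exp (-(√2)⁻¹ * t) := by ring_nf

theorem tendsto_wSol : Tendsto wSol atTop (𝓝 0) := by
  have hbound : Tendsto (fun t => 2 * √2 * exp (-(√2)⁻¹ * t)) atTop (𝓝 0) := by
    simpa using ((tendsto_exp_atBot.comp
      (tendsto_id.const_mul_atTop_of_neg (neg_lt_zero.2 (by positivity)))).const_mul (2 * √2))
  refine squeeze_zero_norm' ?_ hbound
  filter_upwards [eventually_ge_atTop 0] with t ht using abs_wSol_le ht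

def IsBVPSolution (w : ℝ → ℝ) : Prop :=
  ContDiffOn ℝ 2 w (Ici 0) ∧
    (∀ t : ℝ, 0 ≤ t → deriv (deriv w) t - (3 * hetero t ^ 2 - 1) * w t = deriv hetero t) ∧
    w 0 = 0 ∧ Tendsto w atTop (𝓝 0)

theorem isBVPSolution_wSol : IsBVPSolution wSol :=
  ⟨contDiff_wSol.contDiffOn,
    fun t _ => by rw [(hasDerivAt_deriv_wSol t).deriv, deriv_hetero]; ring,
    wSol_zero, tendsto_wSol⟩

namespace IsBVPSolution

variable {v w : ℝ → ℝ} {t : ℝ}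

theorem hasDerivAt (hv : IsBVPSolution v) (ht : 0 < t) : HasDerivAt v (deriv v t) t :=
  ((hv.1.contDiffAt (Ici_mem_nhds ht)).differentiableAt (by norm_num)).hasDerivAt

theorem hasDerivAt_deriv (hv : IsBVPSolution v) (ht : 0 < t) :
    HasDerivAt (deriv v) ((3 * hetero t ^ 2 - 1) * v t + heteroDeriv t) t := by
  have hv' : ContDiffOn ℝ 1 (deriv v) (Ioi 0) :=
    (hv.1.mono Ioi_subset_Ici_self).deriv_of_isOpen isOpen_Ioi (by norm_num)
  refine ((hv'.contDiffAt (Ioi_mem_nhds ht)).differentiableAt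
    (by norm_num)).hasDerivAt.congr_deriv ?_
  have h := hv.2.1 t ht.le
  rw [deriv_hetero] at h
  linarith

theorem eqOn_Ici (hv : IsBVPSolution v) (hw : IsBVPSolution w) : EqOn v w (Ici 0) := fun t ht =>
  sub_eq_zero.1 <| homogeneous_solution_eq_zero (q := fun t => 3 * hetero t ^ 2 - 1)
    (d := v - w) (d' := deriv v - deriv w) (sqrt_pos.2 two_pos) (inv_pos.2 (sqrt_pos.2 two_pos))
    (fun t _ => hasDerivAt_heteroDeriv t)
    (fun t _ => hasDerivAt_neg_sqrt_two_mul_hetero_mul_heteroDeriv t)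
    (fun t ht => inv_sqrt_two_mul_exp_le_heteroDeriv ht.le) (fun t _ => heteroDeriv_le t)
    (fun t ht => (hv.hasDerivAt ht).sub (hw.hasDerivAt ht))
    (fun t ht => ((hv.hasDerivAt_deriv ht).sub (hw.hasDerivAt_deriv ht)).congr_deriv
      (by simp only [Pi.sub_apply]; ring))
    ((hv.1.continuousOn.sub hw.1.continuousOn).continuousWithinAt self_mem_Ici)
    (by simp [hv.2.2.1, hw.2.2.1]) (by have h := hv.2.2.2.sub hw.2.2.2; rwa [sub_zero] at h) ht

end IsBVPSolution

/-- There is a unique `C²` function `w` on `[0,∞)` with `w'' − (3g² − 1)w = g'`,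
`w(0) = 0` and `w → 0` at `∞`; moreover `w` is exponentially decaying. -/
theorem exists_unique_w :
    ∃ w : ℝ → ℝ,
      (ContDiffOn ℝ 2 w (Set.Ici 0) ∧
        (∀ t : ℝ, 0 ≤ t →
          deriv (deriv w) t - (3 * hetero t ^ 2 - 1) * w t = deriv hetero t) ∧
        w 0 = 0 ∧ Filter.Tendsto w Filter.atTop (nhds 0)) ∧
      (∃ C > (0:ℝ), ∃ β > (0:ℝ), ∀ t : ℝ, 0 ≤ t → |w t| ≤ C * Real.exp (-β * t)) ∧
      (∀ w' : ℝ → ℝ,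
        (ContDiffOn ℝ 2 w' (Set.Ici 0) ∧
          (∀ t : ℝ, 0 ≤ t →
            deriv (deriv w') t - (3 * hetero t ^ 2 - 1) * w' t = deriv hetero t) ∧
          w' 0 = 0 ∧ Filter.Tendsto w' Filter.atTop (nhds 0)) →
        ∀ t : ℝ, 0 ≤ t → w' t = w t) :=
  ⟨wSol, isBVPSolution_wSol,
    ⟨2 * √2, by positivity, (√2)⁻¹, by positivity, fun _ ht => abs_wSol_le ht⟩,
    fun _ hv _ ht => IsBVPSolution.eqOn_Ici hv isBVPSolution_wSol ht⟩
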